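/- The Gately measure is the unique map m : D^N → ℝ^N satisfying: (i) Σ_i m_i(D) = n_D for all D; (ii) m(D) = s^a_D + m(P_D) for all D, where P_D(i) = D(i) ∩ N^b_D is the principal restriction; (iii) for every principal network D (one with D = P_D), there exists λ_D > 0 with m(D) = λ_D · s_D. -/
import Mathlib


open Finset

variable {V : Type*} [Fintype V] [DecidableEq V]

/-- Set of predecessors of node `j` in network `D`. -/
def predSet (D : V → Finset V) (j : V) : Finset V :=
  Finset.univ.filter (fun i => j ∈ D i)

/-- Number of predecessors of `j`. -/
def pD (D : V → Finset V) (j : V) : ℕ := (predSet D j).card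

/-- Nodes with exactly one predecessor. -/
def NaD (D : V → Finset V) : Finset V := Finset.univ.filter (fun j => pD D j = 1)

/-- Nodes with at least two predecessors. -/
def NbD (D : V → Finset V) : Finset V := Finset.univ.filter (fun j => 2 ≤ pD D j)

/-- Nodes with at least one predecessor. -/
def ND (D : V → Finset V) : Finset V := Finset.univ.filter (fun j => 1 ≤ pD D j)

/-- Successors of a coalition `H`. -/
def succOf (D : V → Finset V) (H : Finset V) : Finset V := H.biUnion D

/-- Successor representation (successor game). -/
def sD (D : V → Finset V) (H : Finset V) : ℕ := (succOf D H).card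

/-- Strong successor representation (conservative successor game). -/
def sigmaD (D : V → Finset V) (H : Finset V) : ℕ :=
  (Finset.univ.filter (fun j => (predSet D j).Nonempty ∧ predSet D j ⊆ H)).card

/-- Number of successors of `i` having a unique predecessor. -/
def saD (D : V → Finset V) (i : V) : ℕ := (D i ∩ NaD D).card

/-- Number of successors of `i` having multiple predecessors. -/
def sbD (D : V → Finset V) (i : V) : ℕ := (D i ∩ NbD D).card

/-- The Gately power measure. -/
noncomputable def xiM (D : V → Finset V) (i : V) : ℝ :=
  if (NbD D).Nonempty then
    (saD D i : ℝ) + ((sbD D i : ℝ) / (∑ j ∈ NbD D, (pD D j : ℝ))) * ((NbD D).card : ℝ)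
  else (saD D i : ℝ)


/-- The principal restriction of a network. -/
def principal (D : V → Finset V) : V → Finset V := fun i => D i ∩ NbD D

lemma pD_eq_sum (D : V → Finset V) (j : V) :
    pD D j = ∑ i : V, if j ∈ D i then 1 else 0 := by
  unfold pD predSet
  rw [Finset.card_filter]

lemma sum_card_inter (D : V → Finset V) (S : Finset V) :
    ∑ i : V, (D i ∩ S).card = ∑ j ∈ S, pD D j := by
  have h1 : ∀ i : V, (D i ∩ S).card = ∑ j ∈ S, if j ∈ D i then 1 else 0 := by
    intro i
    rw [Finset.inter_comm, ← Finset.filter_mem_eq_inter, Finset.card_filter]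
  simp only [h1]
  rw [Finset.sum_comm]
  exact Finset.sum_congr rfl fun j _ => (pD_eq_sum D j).symm

lemma sum_pD_NaD (D : V → Finset V) : ∑ j ∈ NaD D, pD D j = (NaD D).card := by
  rw [Finset.card_eq_sum_ones]
  exact Finset.sum_congr rfl fun j hj => (Finset.mem_filter.mp hj).2

lemma predSet_principal (D : V → Finset V) (j : V) :
    predSet (principal D) j = if j ∈ NbD D then predSet D j else ∅ := by
  split_ifs with h
  · ext i; simp [predSet, principal, h]
  · ext i; simp [predSet, principal, h]

lemma pD_principal (D : V → Finset V) (j : V) :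
    pD (principal D) j = if j ∈ NbD D then pD D j else 0 := by
  rw [pD, predSet_principal]
  split_ifs <;> simp [pD]

lemma NbD_principal (D : V → Finset V) : NbD (principal D) = NbD D := by
  ext j
  simp only [NbD, Finset.mem_filter, Finset.mem_univ, true_and]
  rw [pD_principal]
  by_cases h : j ∈ NbD D
  · rw [if_pos h]
  · simp only [if_neg h]
    constructor
    · omega
    · intro h2
      exact absurd (Finset.mem_filter.mpr ⟨Finset.mem_univ j, h2⟩) h

lemma NaD_principal (D : V → Finset V) : NaD (principal D) = ∅ := by
  ext j
  simp only [NaD, Finset.mem_filter, Finset.mem_univ, true_and,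
    Finset.notMem_empty, iff_false]
  rw [pD_principal]
  by_cases h : j ∈ NbD D
  · have := (Finset.mem_filter.mp h).2
    simp only [if_pos h]; omega
  · simp [h]

lemma saD_principal (D : V → Finset V) (i : V) : saD (principal D) i = 0 := by
  simp [saD, NaD_principal]

lemma sbD_principal (D : V → Finset V) (i : V) : sbD (principal D) i = sbD D i := by
  simp [sbD, NbD_principal, principal, Finset.inter_assoc]

lemma principal_principal (D : V → Finset V) : principal (principal D) = principal D := by
  funext i
  simp [principal, NbD_principal, Finset.inter_assoc]

lemma principal_irrefl (D : V → Finset V) (hD : ∀ i, i ∉ D i) (i : V) :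
    i ∉ principal D i := fun h => hD i (Finset.mem_inter.mp h).1

lemma sum_pD_NbD_pos (D : V → Finset V) (h : (NbD D).Nonempty) :
    0 < ∑ j ∈ NbD D, pD D j := by
  obtain ⟨j, hj⟩ := h
  have h2 := (Finset.mem_filter.mp hj).2
  calc 0 < pD D j := by omega
    _ ≤ _ := Finset.single_le_sum (fun _ _ => Nat.zero_le _) hj

lemma sum_pD_NbD_real (D : V → Finset V) :
    ∑ j ∈ NbD D, (pD D j : ℝ) = ((∑ j ∈ NbD D, pD D j : ℕ) : ℝ) := by
  push_cast; ring

lemma xiM_principal (D : V → Finset V) (i : V) :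
    xiM (principal D) i = if (NbD D).Nonempty then
      ((sbD D i : ℝ) / (∑ j ∈ NbD D, (pD D j : ℝ))) * ((NbD D).card : ℝ) else 0 := by
  unfold xiM
  rw [NbD_principal, saD_principal, sbD_principal]
  have hsum : ∑ j ∈ NbD D, (pD (principal D) j : ℝ) = ∑ j ∈ NbD D, (pD D j : ℝ) := by
    refine Finset.sum_congr rfl fun j hj => ?_
    rw [pD_principal, if_pos hj]
  rw [hsum]
  split_ifs <;> simp

lemma sum_saD (D : V → Finset V) : ∑ i : V, (saD D i : ℝ) = ((NaD D).card : ℝ) := by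
  rw [← Nat.cast_sum]
  norm_cast
  rw [show (∑ i : V, saD D i) = ∑ j ∈ NaD D, pD D j from sum_card_inter D (NaD D)]
  exact sum_pD_NaD D

lemma sum_sbD (D : V → Finset V) :
    ∑ i : V, (sbD D i : ℝ) = ∑ j ∈ NbD D, (pD D j : ℝ) := by
  rw [← Nat.cast_sum, sum_pD_NbD_real]
  norm_cast
  exact sum_card_inter D (NbD D)

lemma xiM_sum (D : V → Finset V) :
    (∑ i : V, xiM D i) = (((NaD D).card + (NbD D).card : ℕ) : ℝ) := by
  by_cases h : (NbD D).Nonempty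
  · have hS : (∑ j ∈ NbD D, (pD D j : ℝ)) ≠ 0 := by
      rw [sum_pD_NbD_real]
      exact_mod_cast (sum_pD_NbD_pos D h).ne'
    simp only [xiM, if_pos h]
    rw [Finset.sum_add_distrib, sum_saD]
    have : ∑ i : V, ((sbD D i : ℝ) / (∑ j ∈ NbD D, (pD D j : ℝ))) * ((NbD D).card : ℝ)
        = ((NbD D).card : ℝ) := by
      rw [← Finset.sum_mul, ← Finset.sum_div, sum_sbD, div_self hS, one_mul]
    rw [this]
    push_cast; ring
  · simp only [xiM, if_neg h]
    rw [sum_saD]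
    rw [Finset.not_nonempty_iff_eq_empty] at h
    rw [h]
    simp

/-- Axiomatisation: the Gately measure is the unique power measure satisfying
normalisation, normality and restricted proportionality. -/
theorem xi_axiomatisation :
    ((∀ D : V → Finset V, (∀ i, i ∉ D i) →
        (∑ i : V, xiM D i) = (((NaD D).card + (NbD D).card : ℕ) : ℝ)) ∧
     (∀ D : V → Finset V, (∀ i, i ∉ D i) →
        ∀ i : V, xiM D i = (saD D i : ℝ) + xiM (principal D) i) ∧
     (∀ D : V → Finset V, (∀ i, i ∉ D i) → D = principal D →
        ∃ lam : ℝ, 0 < lam ∧ ∀ i : V, xiM D i = lam * ((D i).card : ℝ))) ∧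
    (∀ m : (V → Finset V) → V → ℝ,
      (∀ D : V → Finset V, (∀ i, i ∉ D i) →
        (∑ i : V, m D i) = (((NaD D).card + (NbD D).card : ℕ) : ℝ)) →
      (∀ D : V → Finset V, (∀ i, i ∉ D i) →
        ∀ i : V, m D i = (saD D i : ℝ) + m (principal D) i) →
      (∀ D : V → Finset V, (∀ i, i ∉ D i) → D = principal D →
        ∃ lam : ℝ, 0 < lam ∧ ∀ i : V, m D i = lam * ((D i).card : ℝ)) →
      ∀ D : V → Finset V, (∀ i, i ∉ D i) → ∀ i : V, m D i = xiM D i) := by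
  constructor
  · refine ⟨fun D _ => xiM_sum D, fun D _ i => ?_, fun D _ hDP => ?_⟩
    · -- normality
      rw [xiM_principal]
      unfold xiM
      split_ifs <;> simp
    · -- restricted proportionality
      by_cases h : (NbD D).Nonempty
      · have hS : (0:ℝ) < ∑ j ∈ NbD D, (pD D j : ℝ) := by
          rw [sum_pD_NbD_real]
          exact_mod_cast sum_pD_NbD_pos D h
        refine ⟨((NbD D).card : ℝ) / (∑ j ∈ NbD D, (pD D j : ℝ)), ?_, fun i => ?_⟩
        · apply div_pos _ hS
          exact_mod_cast Finset.card_pos.mpr h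
        · have hsa : saD D i = 0 := by
            have hNa : NaD D = ∅ := by
              rw [hDP]; exact NaD_principal D
            simp [saD, hNa]
          have hsb : sbD D i = (D i).card := by
            unfold sbD
            congr 1
            rw [Finset.inter_eq_left]
            intro j hj
            rw [hDP] at hj
            exact (Finset.mem_inter.mp hj).2
          simp only [xiM, if_pos h, hsa, hsb, Nat.cast_zero, zero_add]
          ring
      · refine ⟨1, one_pos, fun i => ?_⟩
        have hD : D i = ∅ := by
          rw [Finset.not_nonempty_iff_eq_empty] at h
          rw [hDP]
          simp [principal, h]
        simp [xiM, h, hD, saD]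
  · intro m hm1 hm2 _hm3 D hD i
    -- uniqueness
    set P := principal D with hP
    have hPirr : ∀ i, i ∉ P i := principal_irrefl D hD
    have hPP : P = principal P := (principal_principal D).symm
    obtain ⟨lam, hlam, hprop⟩ := _hm3 P hPirr hPP
    have hsumP : ∑ i : V, m P i = (((NaD P).card + (NbD P).card : ℕ) : ℝ) := hm1 P hPirr
    have hcard : ∀ i, ((P i).card : ℝ) = (sbD D i : ℝ) := fun i => rfl
    have hsum2 : ∑ i : V, m P i = lam * ∑ j ∈ NbD D, (pD D j : ℝ) := by
      rw [Finset.sum_congr rfl fun i _ => hprop i]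
      rw [← Finset.mul_sum]
      congr 1
      rw [Finset.sum_congr rfl fun i (_ : i ∈ Finset.univ) => hcard i]
      exact sum_sbD D
    rw [NaD_principal, NbD_principal] at hsumP
    simp only [Finset.card_empty, Nat.zero_add] at hsumP
    rw [hm2 D hD i, hprop i, hcard i]
    rw [xiM]
    by_cases h : (NbD D).Nonempty
    · rw [if_pos h]
      have hS : (0:ℝ) < ∑ j ∈ NbD D, (pD D j : ℝ) := by
        rw [sum_pD_NbD_real]
        exact_mod_cast sum_pD_NbD_pos D h
      have hlameq : lam = ((NbD D).card : ℝ) / (∑ j ∈ NbD D, (pD D j : ℝ)) := by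
        rw [eq_div_iff hS.ne']
        rw [← hsum2, hsumP]
      rw [hlameq]
      ring
    · rw [if_neg h]
      have hPempty : sbD D i = 0 := by
        rw [Finset.not_nonempty_iff_eq_empty] at h
        simp [sbD, h]
      rw [hPempty]
      simp
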